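/- arXiv:1503.05141 — 2 statements merged into one kernel-verified Lean document; each statement's English description precedes it below -/
import Mathlib

section
/- Let β > 0 and γ ∈ (0,1). Fix an arbitrary user trajectory u : ℕ → ℤ and an arbitrary initial host location h_init ∈ ℤ. For every host sequence h : ℕ → ℤ there exists a host sequence h' : ℕ → ℤ such that (i) for every t, either h'(t) equals the previous host location (h_init if t = 0, else h'(t−1)) or h'(t) = u(t) (i.e., h' never migrates to a location other than the user's current location), and (ii) the discounted sum cost of h' is at most that of h, where the cost of a host sequence g in slot t is (1 if g(t) differs from its previous host location, else 0) plus (β if g(t) ≠ u(t), else 0), and the discounted sum cost is ∑_{t=0}^{∞} γ^t times the slot-t cost. -/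
/-- The host location in the slot previous to slot `t`, given initial host
location `hInit` and host sequence `g`. -/
def prevHost (hInit : ℤ) (g : ℕ → ℤ) (t : ℕ) : ℤ :=
  if t = 0 then hInit else g (t - 1)

/-- One-slot cost of host sequence `g`: migration cost `1` if the host moved
in slot `t`, plus data-transmission cost `β` if the host differs from the
user location `u t`. -/
def slotCost (β : ℝ) (u : ℕ → ℤ) (hInit : ℤ) (g : ℕ → ℤ) (t : ℕ) : ℝ :=
  (if g t ≠ prevHost hInit g t then (1 : ℝ) else 0) +
    (if g t ≠ u t then β else 0)

/-- Discounted sum cost of host sequence `g`. -/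
noncomputable def discountedCost (β γ : ℝ) (u : ℕ → ℤ) (hInit : ℤ) (g : ℕ → ℤ) : ℝ :=
  ∑' t : ℕ, γ ^ t * slotCost β u hInit g t

/-- The modified host sequence: copy `h` whenever `h`'s current location is
either the user's location or the modified sequence's previous location;
otherwise stay put. -/
def follow (u : ℕ → ℤ) (hInit : ℤ) (h : ℕ → ℤ) : ℕ → ℤ
  | 0 => if h 0 = u 0 ∨ h 0 = hInit then h 0 else hInit
  | n+1 => if h (n+1) = u (n+1) ∨ h (n+1) = follow u hInit h n then h (n+1)
           else follow u hInit h n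

lemma follow_eq (u : ℕ → ℤ) (hInit : ℤ) (h : ℕ → ℤ) (t : ℕ) :
    follow u hInit h t =
      if h t = u t ∨ h t = prevHost hInit (follow u hInit h) t then h t
      else prevHost hInit (follow u hInit h) t := by
  cases t with
  | zero => simp [follow, prevHost]
  | succ n => simp [follow, prevHost]

lemma slotCost_nonneg (β : ℝ) (hβ : 0 ≤ β) (u : ℕ → ℤ) (hInit : ℤ) (g : ℕ → ℤ) (t : ℕ) :
    0 ≤ slotCost β u hInit g t := by
  unfold slotCost; split_ifs <;> linarith

lemma slotCost_le (β : ℝ) (hβ : 0 ≤ β) (u : ℕ → ℤ) (hInit : ℤ) (g : ℕ → ℤ) (t : ℕ) :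
    slotCost β u hInit g t ≤ 1 + β := by
  unfold slotCost; split_ifs <;> linarith

/-- Key per-slot inequality with potential term. -/
lemma key (β γ : ℝ) (hβ : 0 < β) (hγ0 : 0 < γ) (hγ1 : γ ≤ 1)
    (u : ℕ → ℤ) (hInit : ℤ) (h h' : ℕ → ℤ) (t : ℕ)
    (H : h' t = if h t = u t ∨ h t = prevHost hInit h' t then h t
        else prevHost hInit h' t) :
    γ * slotCost β u hInit h' t + (if h' t = h t then 0 else γ) ≤
      γ * slotCost β u hInit h t +
        (if prevHost hInit h' t = prevHost hInit h t then 0 else 1) := by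
  by_cases e : h' t = h t
  · by_cases ep : prevHost hInit h' t = prevHost hInit h t
    · have : slotCost β u hInit h' t = slotCost β u hInit h t := by
        unfold slotCost; rw [e, ep]
      rw [this, if_pos e, if_pos ep]
    · -- c' ≤ 1 + tr, c ≥ tr, need γ c' ≤ γ c + 1
      rw [if_pos e, if_neg ep]
      have hc' : slotCost β u hInit h' t ≤ 1 + (if h t ≠ u t then β else 0) := by
        unfold slotCost; rw [e]
        split_ifs <;> linarith
      have hc : (if h t ≠ u t then β else 0) ≤ slotCost β u hInit h t := by
        unfold slotCost; split_ifs <;> linarith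
      nlinarith [mul_le_mul_of_nonneg_left hc' hγ0.le,
        mul_le_mul_of_nonneg_left hc hγ0.le]
  · -- h' t ≠ h t: so the if-condition in H is false, h' t = prev h',
    -- h t ≠ u t and h t ≠ prev h'
    have hcond : ¬ (h t = u t ∨ h t = prevHost hInit h' t) := by
      intro hc
      rw [if_pos hc] at H
      exact e H
    push_neg at hcond
    obtain ⟨hu, hp⟩ := hcond
    rw [if_neg (by push_neg; exact ⟨hu, hp⟩)] at H
    have hc' : slotCost β u hInit h' t ≤ β := by
      unfold slotCost; rw [H, if_neg (by simp)]
      split_ifs <;> linarith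
    rw [if_neg e]
    by_cases ep : prevHost hInit h' t = prevHost hInit h t
    · -- h migrated (h t ≠ prev h = prev h') and pays β; c = 1 + β
      have hc : slotCost β u hInit h t = 1 + β := by
        unfold slotCost
        rw [if_pos (by rw [← ep]; exact hp), if_pos hu]
      rw [hc, if_pos ep]
      nlinarith [mul_le_mul_of_nonneg_left hc' hγ0.le]
    · -- c ≥ β, need γ c' + γ ≤ γ c + 1
      have hc : β ≤ slotCost β u hInit h t := by
        unfold slotCost
        rw [if_pos hu]
        split_ifs <;> linarith
      rw [if_neg ep]
      nlinarith [mul_le_mul_of_nonneg_left hc' hγ0.le,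
        mul_le_mul_of_nonneg_left hc hγ0.le]

/-- Lemma 1 (path-wise form): for every host sequence `h` there is a host
sequence `h'` that never migrates to a location other than the user's current
location, and whose discounted sum cost is at most that of `h`. -/
theorem never_migrate_to_other_locations (β γ : ℝ) (hβ : 0 < β)
    (hγ0 : 0 < γ) (hγ1 : γ < 1) (u : ℕ → ℤ) (hInit : ℤ) :
    ∀ h : ℕ → ℤ, ∃ h' : ℕ → ℤ,
      (∀ t : ℕ, h' t = prevHost hInit h' t ∨ h' t = u t) ∧
      discountedCost β γ u hInit h' ≤ discountedCost β γ u hInit h := by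
  intro h
  set h' : ℕ → ℤ := follow u hInit h with hh'
  refine ⟨h', ?_, ?_⟩
  · intro t
    have H := follow_eq u hInit h t
    by_cases hc : h t = u t ∨ h t = prevHost hInit h' t
    · rw [if_pos hc] at H
      rcases hc with hc | hc
      · right; rw [← hh'] at H; rw [H, hc]
      · left; rw [← hh'] at H; rw [H, hc]
    · rw [if_neg hc] at H
      left; rw [← hh'] at H; rw [H]
  · -- cost comparison
    have Hkey : ∀ t, γ * slotCost β u hInit h' t + (if h' t = h t then 0 else γ) ≤
        γ * slotCost β u hInit h t +
          (if prevHost hInit h' t = prevHost hInit h t then 0 else 1) := by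
      intro t
      exact key β γ hβ hγ0 hγ1.le u hInit h h' t (follow_eq u hInit h t)
    -- strengthened partial sums
    have A : ∀ N : ℕ,
        (∑ t ∈ Finset.range (N+1), γ ^ t * slotCost β u hInit h' t) +
          (if h' N = h N then 0 else γ ^ N) ≤
        ∑ t ∈ Finset.range (N+1), γ ^ t * slotCost β u hInit h t := by
      intro N
      induction N with
      | zero =>
        have hk := Hkey 0
        have hp : prevHost hInit h' 0 = prevHost hInit h 0 := by simp [prevHost]
        rw [if_pos hp] at hk
        simp only [zero_add, Finset.sum_range_one, pow_zero, one_mul]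
        by_cases e : h' 0 = h 0
        · rw [if_pos e] at hk ⊢
          have := le_of_mul_le_mul_left
            (show γ * (slotCost β u hInit h' 0 + 0) ≤ γ * slotCost β u hInit h 0 by
              ring_nf; linarith) hγ0
          linarith
        · rw [if_neg e] at hk ⊢
          have := le_of_mul_le_mul_left
            (show γ * (slotCost β u hInit h' 0 + 1) ≤ γ * slotCost β u hInit h 0 by
              ring_nf; linarith) hγ0
          linarith
      | succ N ih =>
        rw [Finset.sum_range_succ, Finset.sum_range_succ
          (fun t => γ ^ t * slotCost β u hInit h t)]
        have hk := Hkey (N+1)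
        have hp' : prevHost hInit h' (N+1) = h' N := by simp [prevHost]
        have hp : prevHost hInit h (N+1) = h N := by simp [prevHost]
        rw [hp', hp] at hk
        -- multiply hk by γ^N ≥ 0
        have hmul := mul_le_mul_of_nonneg_left hk (pow_nonneg hγ0.le N)
        have hγN : (0:ℝ) < γ ^ N := pow_pos hγ0 N
        have e1 : γ ^ (N+1) = γ ^ N * γ := by ring
        by_cases e : h' (N+1) = h (N+1)
        · rw [if_pos e] at hmul ⊢
          by_cases ep : h' N = h N
          · rw [if_pos ep] at hmul ih; rw [e1]; nlinarith [hmul, ih, hγN]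
          · rw [if_neg ep] at hmul ih; rw [e1]; nlinarith [hmul, ih, hγN]
        · rw [if_neg e] at hmul ⊢
          by_cases ep : h' N = h N
          · rw [if_pos ep] at hmul ih; rw [e1]; nlinarith [hmul, ih, hγN]
          · rw [if_neg ep] at hmul ih; rw [e1]; nlinarith [hmul, ih, hγN]
    have Apart : ∀ N : ℕ,
        (∑ t ∈ Finset.range N, γ ^ t * slotCost β u hInit h' t) ≤
        ∑ t ∈ Finset.range N, γ ^ t * slotCost β u hInit h t := by
      intro N
      cases N with
      | zero => simp
      | succ M =>
        have := A M
        have hpen : (0:ℝ) ≤ (if h' M = h M then 0 else γ ^ M) := by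
          split_ifs <;> positivity
        linarith
    -- summability
    have hsum : ∀ g : ℕ → ℤ, Summable (fun t => γ ^ t * slotCost β u hInit g t) := by
      intro g
      apply Summable.of_nonneg_of_le
        (fun t => mul_nonneg (pow_nonneg hγ0.le t) (slotCost_nonneg β hβ.le u hInit g t))
        (fun t => mul_le_mul_of_nonneg_left (slotCost_le β hβ.le u hInit g t)
          (pow_nonneg hγ0.le t))
      exact (summable_geometric_of_lt_one hγ0.le hγ1).mul_right (1 + β)
    have t1 := (hsum h').hasSum.tendsto_sum_nat
    have t2 := (hsum h).hasSum.tendsto_sum_nat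
    exact le_of_tendsto_of_tendsto' t1 t2 Apart
end

section
/- Let V : {M,...,N} → ℝ be the unique fixed point of the Bellman operator T. Then there exist integers k₁ and k₂ with M < k₁ ≤ 0 and 0 ≤ k₂ < N such that: for every state s with k₁ ≤ s ≤ k₂, the no-migration action achieves the minimum, i.e., V(s) = C₀(s) + γ(q·V(s−1) + (1−p−q)·V(s) + p·V(s+1)); and for every state s with M ≤ s < k₁ or k₂ < s ≤ N, the migration action achieves the minimum, i.e., V(s) = C₁(s) + γ(q·V(−1) + (1−p−q)·V(0) + p·V(1)). -/
/-- One-slot cost of the no-migration action: `0` at state `0`, else `β`. -/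
def costNoMig (β : ℝ) (s : ℤ) : ℝ := if s = 0 then 0 else β

/-- One-slot cost of the migration action: `0` at state `0`, else `1`. -/
def costMig (s : ℤ) : ℝ := if s = 0 then 0 else 1

/-- Key lemma: if migrating is optimal at some positive interior state `u`,
it is optimal at all states in `[u, N]`. -/
lemma mig_upward (N : ℤ) (β γ p q : ℝ) (hβ : 0 < β) (hγ0 : 0 < γ) (hγ1 : γ < 1)
    (hp : 0 ≤ p) (hq : 0 ≤ q) (hpq : p + q ≤ 1) (V : ℤ → ℝ) (b : ℝ)
    (hmin : ∀ s : ℤ, 1 ≤ s → s < N →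
      V s = min (β + γ * (q * V (s - 1) + (1 - p - q) * V s + p * V (s + 1))) b)
    (hle : ∀ s : ℤ, 0 ≤ s → s ≤ N → V s ≤ b)
    (hVN : V N = b)
    (u : ℤ) (hu1 : 1 ≤ u) (huN : u < N) (hVu : V u = b) :
    ∀ s : ℤ, u ≤ s → s ≤ N → V s = b := by
  have hcu := hmin u hu1 huN
  rw [hVu] at hcu
  have hba : b ≤ β + γ * (q * V (u - 1) + (1 - p - q) * b + p * V (u + 1)) :=
    hcu.trans_le (min_le_left _ _)
  have h1 : V (u - 1) ≤ b := hle (u - 1) (by omega) (by omega)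
  have h2 : V (u + 1) ≤ b := hle (u + 1) (by omega) (by omega)
  have hc : b ≤ β + γ * b := by
    nlinarith [mul_nonneg (mul_nonneg hγ0.le hq) (sub_nonneg.2 h1),
      mul_nonneg (mul_nonneg hγ0.le hp) (sub_nonneg.2 h2)]
  obtain ⟨t, ht, hmax⟩ := Finset.exists_max_image (Finset.Icc u N) (fun s => b - V s)
    ⟨u, Finset.mem_Icc.2 ⟨le_refl u, huN.le⟩⟩
  simp only [Finset.mem_Icc] at ht
  by_cases hμ : b - V t ≤ 0
  · intro s hs1 hs2
    have := hmax s (Finset.mem_Icc.2 ⟨hs1, hs2⟩)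
    have := hle s (by omega) hs2
    linarith
  · push_neg at hμ
    exfalso
    have htu : t ≠ u := by rintro rfl; rw [hVu] at hμ; linarith
    have htN : t ≠ N := by rintro rfl; rw [hVN] at hμ; linarith
    have ht1 : 1 ≤ t := by omega
    have htN' : t < N := by omega
    have hm := hmin t ht1 htN'
    have hVtb : V t < b := by linarith
    have hVta : V t = β + γ * (q * V (t - 1) + (1 - p - q) * V t + p * V (t + 1)) := by
      rcases le_total (β + γ * (q * V (t - 1) + (1 - p - q) * V t + p * V (t + 1))) b with h | h
      · rwa [min_eq_left h] at hm
      · rw [min_eq_right h] at hm; linarith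
    have hf1 : b - V (t - 1) ≤ b - V t := hmax (t - 1) (Finset.mem_Icc.2 ⟨by omega, by omega⟩)
    have hf2 : b - V (t + 1) ≤ b - V t := hmax (t + 1) (Finset.mem_Icc.2 ⟨by omega, by omega⟩)
    nlinarith [mul_le_mul_of_nonneg_left hf1 (mul_nonneg hγ0.le hq),
      mul_le_mul_of_nonneg_left hf2 (mul_nonneg hγ0.le hp),
      mul_le_mul_of_nonneg_left hμ.le (mul_nonneg hγ0.le (by linarith : (0:ℝ) ≤ 1 - p - q))]

/-- Proposition 1: for the fixed point `V` of the Bellman operator of the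
service-migration MDP, there exist thresholds `M < k₁ ≤ 0 ≤ k₂ < N` such that
on `[k₁, k₂]` the no-migration action achieves the minimum and outside
`[k₁, k₂]` the migration action achieves the minimum. -/
theorem optimal_threshold_policy_exists
    (M N : ℤ) (hM : M < 0) (hN : 0 < N)
    (β γ p q : ℝ) (hβ : 0 < β) (hγ0 : 0 < γ) (hγ1 : γ < 1)
    (hp : 0 ≤ p) (hq : 0 ≤ q) (hpq : p + q ≤ 1)
    (V : ℤ → ℝ)
    (hfix_mid : ∀ s : ℤ, M < s → s < N →
      V s = min
        (costNoMig β s + γ * (q * V (s - 1) + (1 - p - q) * V s + p * V (s + 1)))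
        (costMig s + γ * (q * V (-1) + (1 - p - q) * V 0 + p * V 1)))
    (hfix_M : V M = costMig M + γ * (q * V (-1) + (1 - p - q) * V 0 + p * V 1))
    (hfix_N : V N = costMig N + γ * (q * V (-1) + (1 - p - q) * V 0 + p * V 1)) :
    ∃ k₁ k₂ : ℤ, M < k₁ ∧ k₁ ≤ 0 ∧ 0 ≤ k₂ ∧ k₂ < N ∧
      (∀ s : ℤ, k₁ ≤ s → s ≤ k₂ →
        V s = costNoMig β s +
          γ * (q * V (s - 1) + (1 - p - q) * V s + p * V (s + 1))) ∧
      (∀ s : ℤ, (M ≤ s ∧ s < k₁) ∨ (k₂ < s ∧ s ≤ N) →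
        V s = costMig s + γ * (q * V (-1) + (1 - p - q) * V 0 + p * V 1)) := by
  classical
  set W : ℝ := q * V (-1) + (1 - p - q) * V 0 + p * V 1 with hW
  set b : ℝ := 1 + γ * W with hb
  have hcostMig_le : ∀ s : ℤ, costMig s ≤ 1 := by
    intro s; unfold costMig; split <;> norm_num
  have hcostMig_ne : ∀ s : ℤ, s ≠ 0 → costMig s = 1 := by
    intro s hs; unfold costMig; rw [if_neg hs]
  have hcostNoMig_ne : ∀ s : ℤ, s ≠ 0 → costNoMig β s = β := by
    intro s hs; unfold costNoMig; rw [if_neg hs]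
  have hVM : V M = b := by rw [hfix_M, hcostMig_ne M (by omega), ← hb]
  have hVN : V N = b := by rw [hfix_N, hcostMig_ne N (by omega), ← hb]
  -- V ≤ b everywhere
  have hle : ∀ s : ℤ, M ≤ s → s ≤ N → V s ≤ b := by
    intro s h1 h2
    rcases eq_or_lt_of_le h1 with rfl | h1'
    · exact le_of_eq hVM
    rcases eq_or_lt_of_le h2 with rfl | h2'
    · exact le_of_eq hVN
    have h := hfix_mid s h1' h2'
    calc V s ≤ costMig s + γ * W := h.trans_le (min_le_right _ _)
      _ ≤ b := by have := hcostMig_le s; rw [hb]; linarith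
  -- V 0 satisfies the no-migration equality
  have h0 : V 0 = costNoMig β 0 + γ * (q * V (0 - 1) + (1 - p - q) * V 0 + p * V (0 + 1)) := by
    have h := hfix_mid 0 hM hN
    have e : costNoMig β 0 = costMig 0 := by unfold costNoMig costMig; norm_num
    rw [show (0:ℤ) - 1 = -1 by ring, show (0:ℤ) + 1 = 1 by ring] at h
    rw [e, ← hW, min_self] at h
    rw [show (0:ℤ) - 1 = -1 by ring, show (0:ℤ) + 1 = 1 by ring, e, ← hW]
    exact h
  -- min-form of the fixed point on positive interior states
  have hminpos : ∀ s : ℤ, 1 ≤ s → s < N →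
      V s = min (β + γ * (q * V (s - 1) + (1 - p - q) * V s + p * V (s + 1))) b := by
    intro s h1 h2
    have h := hfix_mid s (by omega) h2
    rwa [hcostNoMig_ne s (by omega), hcostMig_ne s (by omega), ← hb] at h
  -- reflected system for negative states
  have hminneg : ∀ s : ℤ, 1 ≤ s → s < -M →
      (fun t => V (-t)) s = min (β + γ * (p * (fun t => V (-t)) (s - 1)
        + (1 - q - p) * (fun t => V (-t)) s + q * (fun t => V (-t)) (s + 1))) b := by
    intro s h1 h2
    simp only
    have h := hfix_mid (-s) (by omega) (by omega)
    rw [hcostNoMig_ne (-s) (by omega), hcostMig_ne (-s) (by omega), ← hb] at h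
    rw [show (-s : ℤ) - 1 = -(s + 1) by ring, show (-s : ℤ) + 1 = -(s - 1) by ring] at h
    have e : β + γ * (p * V (-(s - 1)) + (1 - q - p) * V (-s) + q * V (-(s + 1)))
        = β + γ * (q * V (-(s + 1)) + (1 - p - q) * V (-s) + p * V (-(s - 1))) := by ring
    rw [e]
    exact h
  have hleneg : ∀ s : ℤ, 0 ≤ s → s ≤ -M → (fun t => V (-t)) s ≤ b := by
    intro s h1 h2; exact hle (-s) (by omega) (by omega)
  have hVM' : (fun t => V (-t)) (-M) = b := by simpa using hVM
  -- construct k₂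
  obtain ⟨k₂, hk₂0, hk₂N, hk₂nomig, hk₂mig⟩ : ∃ k₂ : ℤ, 0 ≤ k₂ ∧ k₂ < N ∧
      (∀ s : ℤ, 1 ≤ s → s ≤ k₂ → V s ≠ b) ∧ (∀ s : ℤ, k₂ < s → s < N → V s = b) := by
    by_cases hne : ((Finset.Icc 1 (N - 1)).filter (fun u => V u = b)).Nonempty
    · set u₀ := ((Finset.Icc 1 (N - 1)).filter (fun u => V u = b)).min' hne with hu₀
      have hu₀mem : u₀ ∈ (Finset.Icc 1 (N - 1)).filter (fun u => V u = b) :=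
        Finset.min'_mem _ hne
      rw [Finset.mem_filter, Finset.mem_Icc] at hu₀mem
      obtain ⟨⟨hu₀1, hu₀2⟩, hu₀b⟩ := hu₀mem
      have hu₀le : ∀ v : ℤ, 1 ≤ v → v ≤ N - 1 → V v = b → u₀ ≤ v := by
        intro v h1 h2 h3
        exact Finset.min'_le _ v (Finset.mem_filter.2 ⟨Finset.mem_Icc.2 ⟨h1, h2⟩, h3⟩)
      refine ⟨u₀ - 1, by omega, by omega, ?_, ?_⟩
      · intro s hs1 hs2 hVs
        have := hu₀le s hs1 (by omega) hVs
        omega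
      · intro s hs1 hs2
        exact mig_upward N β γ p q hβ hγ0 hγ1 hp hq hpq V b hminpos
          (fun t h1 h2 => hle t (by omega) h2) hVN u₀ hu₀1 (by omega) hu₀b s (by omega) hs2.le
    · refine ⟨N - 1, by omega, by omega, ?_, ?_⟩
      · intro s hs1 hs2 hVs
        exact hne ⟨s, Finset.mem_filter.2 ⟨Finset.mem_Icc.2 ⟨hs1, hs2⟩, hVs⟩⟩
      · intro s h1 h2
        exact absurd h2 (by omega)
  -- construct k₁
  obtain ⟨k₁, hk₁0, hk₁M, hk₁nomig, hk₁mig⟩ : ∃ k₁ : ℤ, k₁ ≤ 0 ∧ M < k₁ ∧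
      (∀ s : ℤ, k₁ ≤ s → s ≤ -1 → V s ≠ b) ∧ (∀ s : ℤ, M < s → s < k₁ → V s = b) := by
    by_cases hne : ((Finset.Icc 1 (-M - 1)).filter (fun u => V (-u) = b)).Nonempty
    · set u₀ := ((Finset.Icc 1 (-M - 1)).filter (fun u => V (-u) = b)).min' hne with hu₀
      have hu₀mem : u₀ ∈ (Finset.Icc 1 (-M - 1)).filter (fun u => V (-u) = b) :=
        Finset.min'_mem _ hne
      rw [Finset.mem_filter, Finset.mem_Icc] at hu₀mem
      obtain ⟨⟨hu₀1, hu₀2⟩, hu₀b⟩ := hu₀mem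
      have hu₀le : ∀ v : ℤ, 1 ≤ v → v ≤ -M - 1 → V (-v) = b → u₀ ≤ v := by
        intro v h1 h2 h3
        exact Finset.min'_le _ v (Finset.mem_filter.2 ⟨Finset.mem_Icc.2 ⟨h1, h2⟩, h3⟩)
      refine ⟨-u₀ + 1, by omega, by omega, ?_, ?_⟩
      · intro s hs1 hs2 hVs
        have := hu₀le (-s) (by omega) (by omega) (by rw [neg_neg]; exact hVs)
        omega
      · intro s hs1 hs2
        have := mig_upward (-M) β γ q p hβ hγ0 hγ1 hq hp (by linarith)
          (fun t => V (-t)) b hminneg hleneg hVM' u₀ hu₀1 (by omega) hu₀b (-s)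
          (by omega) (by omega)
        simpa using this
    · refine ⟨M + 1, by omega, by omega, ?_, ?_⟩
      · intro s hs1 hs2 hVs
        refine hne ⟨-s, Finset.mem_filter.2 ⟨Finset.mem_Icc.2 ⟨by omega, by omega⟩, ?_⟩⟩
        rw [neg_neg]; exact hVs
      · intro s h1 h2
        exact absurd h2 (by omega)
  refine ⟨k₁, k₂, hk₁M, hk₁0, hk₂0, hk₂N, ?_, ?_⟩
  · -- no-migration on [k₁, k₂]
    intro s hs1 hs2
    rcases lt_trichotomy s 0 with hs | rfl | hs
    · have hi := hfix_mid s (by omega) (by omega)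
      rw [hcostNoMig_ne s (by omega), hcostMig_ne s (by omega), ← hb] at hi
      have hne := hk₁nomig s hs1 (by omega)
      rw [hcostNoMig_ne s (by omega)]
      rcases le_total (β + γ * (q * V (s - 1) + (1 - p - q) * V s + p * V (s + 1))) b with h | h
      · rwa [min_eq_left h] at hi
      · rw [min_eq_right h] at hi; exact absurd hi hne
    · exact h0
    · have hi := hfix_mid s (by omega) (by omega)
      rw [hcostNoMig_ne s (by omega), hcostMig_ne s (by omega), ← hb] at hi
      have hne := hk₂nomig s (by omega) hs2
      rw [hcostNoMig_ne s (by omega)]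
      rcases le_total (β + γ * (q * V (s - 1) + (1 - p - q) * V s + p * V (s + 1))) b with h | h
      · rwa [min_eq_left h] at hi
      · rw [min_eq_right h] at hi; exact absurd hi hne
  · -- migration outside [k₁, k₂]
    intro s hs
    rcases hs with ⟨h1, h2⟩ | ⟨h1, h2⟩
    · rcases eq_or_lt_of_le h1 with rfl | h1'
      · exact hfix_M
      · rw [hcostMig_ne s (by omega), ← hb]
        exact hk₁mig s h1' h2
    · rcases eq_or_lt_of_le h2 with rfl | h2'
      · exact hfix_N
      · rw [hcostMig_ne s (by omega), ← hb]
        exact hk₂mig s h1 h2'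
end
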